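/- arXiv:2508.21449 — 2 statements merged into one kernel-verified Lean document; each statement's English description precedes it below -/
import Mathlib

section
/- The conjunction of two stratified queries over disjoint z-variable tuples is stratified: if Q(x,y,z) is stratified by Q₁,…,Qₙ and Q'(x,y,z') is stratified by Q'₁,…,Q'ₘ, where z and z' are disjoint and no variable of z' occurs in Q and (in every state where Q ∧ Q' is satisfiable for a given x-binding) the z-values determined by Q do not depend on Q', then Q ∧ Q' is stratified by Q₁,…,Qₙ,Q'₁,…,Q'ₘ with z-order z₁,…,zₙ,z'₁,…,z'ₘ. -/
/-- An atom of a conjunctive query: a predicate applied to a list of variables. -/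
structure Atom (P V : Type*) where
  pred : P
  args : List V

/-- A grounding `σ` satisfies a conjunctive query `Q` in state `s` if every atom of
`Q`, after substitution, lies in `s`. -/
def satQuery {P V O : Type*} (s : Set (P × List O)) (σ : V → O) (Q : Set (Atom P V)) : Prop :=
  ∀ a ∈ Q, (a.pred, a.args.map σ) ∈ s

/-- A query, given as the conjunction of subqueries `sub 0, …, sub (n-1)`, is
stratified (w.r.t. the explicit variables `x` and implicit variables `z`) in state
`s` if any grounding satisfying a prefix `sub 0 ∧ … ∧ sub i` that agrees on `x`
with a full satisfying grounding agrees with it on `z 0, …, z i`. -/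
def Stratified {P V O : Type*} (s : Set (P × List O)) (x : Set V)
    (n : ℕ) (z : Fin n → V) (sub : Fin n → Set (Atom P V)) : Prop :=
  ∀ σ : V → O, (∀ i, satQuery s σ (sub i)) → ∀ i : Fin n,
    ∀ σ' : V → O, (∀ j ≤ i, satQuery s σ' (sub j)) → (∀ v ∈ x, σ' v = σ v) →
      ∀ j ≤ i, σ' (z j) = σ (z j)

/-- The conjunction of two stratified queries over disjoint `z`-variable tuples is
stratified: if `Q(x,y,z)` is stratified by `sub 0, …, sub (n-1)` and `Q'(x,y,z')`
is stratified by `sub' 0, …, sub' (m-1)` (where the `Q'ᵢ` may mention the `z`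
variables as if they were `x`-variables), the `z` and `z'` tuples are disjoint,
no variable of `z'` occurs in `Q`, and the `z`-values determined by `Q` do not
depend on `Q'`, then `Q ∧ Q'` is stratified by `sub 0, …, sub (n-1), sub' 0, …,
sub' (m-1)` with `z`-order `z 0, …, z (n-1), z' 0, …, z' (m-1)`. -/
theorem stratified_conjunction {P V O : Type*}
    (s : Set (P × List O)) (x : Set V)
    (n m : ℕ) (z : Fin n → V) (z' : Fin m → V)
    (sub : Fin n → Set (Atom P V)) (sub' : Fin m → Set (Atom P V))
    (hQ : Stratified (O := O) s x n z sub)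
    (hQ' : Stratified (O := O) s (x ∪ Set.range z) m z' sub')
    (hdisj : ∀ i j, z i ≠ z' j)
    (hnotin : ∀ j : Fin m, ∀ i : Fin n, ∀ a ∈ sub i, z' j ∉ a.args)
    (hnodep : ∀ σ σ₂ : V → O,
      (∀ i : Fin (n + m), satQuery s σ (Fin.addCases sub sub' i)) →
      (∀ i : Fin n, satQuery s σ₂ (sub i)) → (∀ v ∈ x, σ₂ v = σ v) →
      ∀ i : Fin n, σ₂ (z i) = σ (z i)) :
    Stratified (O := O) s x (n + m) (Fin.addCases z z') (Fin.addCases sub sub') := by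

  intro σ hσ i σ' hσ' hx
  have hσsub : ∀ k : Fin n, satQuery s σ (sub k) := by
    intro k
    have := hσ (Fin.castAdd m k)
    simpa using this
  have hσsub' : ∀ k : Fin m, satQuery s σ (sub' k) := by
    intro k
    have := hσ (Fin.natAdd n k)
    simpa using this
  have key1 : ∀ j : Fin n, (Fin.castAdd m j) ≤ i → σ' (z j) = σ (z j) := by
    intro j hj
    refine hQ σ hσsub j σ' ?_ hx j le_rfl
    intro k hk
    have hk' : (Fin.castAdd m k) ≤ i := by
      simp only [Fin.le_def, Fin.coe_castAdd] at *
      omega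
    have := hσ' (Fin.castAdd m k) hk'
    simpa using this
  have key2 : ∀ j : Fin m, (Fin.natAdd n j) ≤ i → σ' (z' j) = σ (z' j) := by
    intro j hj
    have hσ'sub : ∀ k : Fin n, satQuery s σ' (sub k) := by
      intro k
      have hk' : (Fin.castAdd m k) ≤ i := by
        simp only [Fin.le_def, Fin.coe_castAdd, Fin.coe_natAdd] at *
        omega
      have := hσ' (Fin.castAdd m k) hk'
      simpa using this
    have hzall : ∀ k : Fin n, σ' (z k) = σ (z k) := hnodep σ σ' hσ hσ'sub hx
    refine hQ' σ hσsub' j σ' ?_ ?_ j le_rfl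
    · intro k hk
      have hk' : (Fin.natAdd n k) ≤ i := by
        simp only [Fin.le_def, Fin.coe_natAdd] at *
        omega
      have := hσ' (Fin.natAdd n k) hk'
      simpa using this
    · intro v hv
      rcases hv with hv | ⟨k, rfl⟩
      · exact hx v hv
      · exact hzall k
  intro j hj
  rcases Nat.lt_or_ge j.val n with h | h
  · have hje : j = Fin.castAdd m ⟨j.1, h⟩ := Fin.ext rfl
    rw [hje]; simp only [Fin.addCases_left]
    exact key1 _ (hje ▸ hj)
  · have hlt : j.1 - n < m := by omega
    have hje : j = Fin.natAdd n ⟨j.1 - n, hlt⟩ := by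
      apply Fin.ext
      simp only [Fin.coe_natAdd]
      omega
    rw [hje]; simp only [Fin.addCases_right]
    exact key2 _ (hje ▸ hj)
end

section
/- Convergence of learned preconditions: since for a fixed action schema a(x), fixed binding query Q with z-variables z, and a finite vocabulary of predicates of bounded arity, there are finitely many lifted atoms over variables x, y, z, there exists a finite set of traces T such that the set of valid preconditions over T equals the set of valid preconditions over the union of all traces of the hidden domain. -/
/-- A grounding `σ` satisfies an atom in state `s`. -/
def satAtom {P V O : Type*} (s : Set (P × List O)) (σ : V → O) (a : Atom P V) : Prop :=
  (a.pred, a.args.map σ) ∈ s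

/-- A lifted atom `p` is a valid precondition over trace set `T` (as before). -/
def ValidPre {P V O : Type*} (x z : Set V) (Q : Set (Atom P V))
    (T : Set (List (Set (P × List O) × (V → O)))) (p : Atom P V) : Prop :=
  ∀ s : Set (P × List O), ∀ o : V → O, (∃ τ ∈ T, (s, o) ∈ τ) →
    ∀ σ : V → O, satQuery s σ Q → (∀ v ∈ x, σ v = o v) →
      ∃ σ' : V → O, (∀ v ∈ x ∪ z, σ' v = σ v) ∧ satAtom s σ' p

lemma validPre_anti {P V O : Type*} (x z : Set V) (Q : Set (Atom P V))
    {T T' : Set (List (Set (P × List O) × (V → O)))} (hsub : T' ⊆ T)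
    {p : Atom P V} (h : ValidPre x z Q T p) : ValidPre x z Q T' p := by
  intro s o ⟨τ, hτ, hmem⟩ σ hQ hx
  exact h s o ⟨τ, hsub hτ, hmem⟩ σ hQ hx

/-- Convergence of learned preconditions: for a fixed action schema, fixed binding
query `Q` with `z`-variables `z`, and a finite set `A` of lifted atoms (a finite
vocabulary of predicates of bounded arity over the finite variable sets yields
finitely many lifted atoms), there is a finite set `T` of traces of the hidden
domain `𝒯` such that the set of valid preconditions in `A` over `T` equals the
set of valid preconditions over the whole family `𝒯` (validity over the family
meaning validity over every finite subset). -/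
theorem learned_preconditions_converge {P V O : Type*}
    (x z : Set V) (Q : Set (Atom P V))
    (𝒯 : Set (List (Set (P × List O) × (V → O))))
    (A : Set (Atom P V)) (hA : A.Finite) :
    ∃ T : Set (List (Set (P × List O) × (V → O))), T ⊆ 𝒯 ∧ T.Finite ∧
      ∀ p ∈ A, ValidPre (O := O) x z Q T p ↔
        (∀ T' : Set (List (Set (P × List O) × (V → O))), T' ⊆ 𝒯 → T'.Finite →
          ValidPre (O := O) x z Q T' p) := by
  classical
  set Bad := fun p : Atom P V =>
    ∃ T' : Set (List (Set (P × List O) × (V → O))),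
      (T' ⊆ 𝒯 ∧ T'.Finite) ∧ ¬ ValidPre (O := O) x z Q T' p with hBad
  set S := fun p : Atom P V =>
    if h : Bad p then h.choose else ∅ with hS
  have hSsub : ∀ p, S p ⊆ 𝒯 := by
    intro p
    by_cases h : Bad p
    · simp only [hS, dif_pos h]; exact h.choose_spec.1.1
    · simp [hS, dif_neg h]
  have hSfin : ∀ p, (S p).Finite := by
    intro p
    by_cases h : Bad p
    · simp only [hS, dif_pos h]; exact h.choose_spec.1.2
    · simp [hS, dif_neg h]
  refine ⟨⋃ p ∈ A, S p, ?_, ?_, ?_⟩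
  · exact Set.iUnion₂_subset fun p _ => hSsub p
  · exact hA.biUnion fun p _ => hSfin p
  · intro p hp
    constructor
    · intro hval T' hsub hfin
      by_contra hnot
      have hb : Bad p := ⟨T', ⟨hsub, hfin⟩, hnot⟩
      have hSp : ¬ ValidPre (O := O) x z Q (S p) p := by
        simp only [hS, dif_pos hb]; exact hb.choose_spec.2
      exact hSp (validPre_anti x z Q (Set.subset_biUnion_of_mem hp) hval)
    · intro h
      exact h _ (Set.iUnion₂_subset fun q _ => hSsub q) (hA.biUnion fun q _ => hSfin q)
end
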